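/- Let f : [0,1] → 2^[0,1] be upper semicontinuous with connected graph and the Weak Intermediate Value Property, let [a,b] ⊆ [0,1] with b < 1, and suppose C is a connected component of G(f) ∩ ([a,b] × [0,1]) viewed inside G(f) ∩ ([a, b+ε] × [0,1]) for small ε > 0. Then C cannot be a component of G(f) ∩ ([a, b+ε] × [0,1]) contained in [a,b] × [0,1] that fails to meet {b+ε} × [0,1]; more precisely, every component of G(f) ∩ ([a, b+ε] × [0,1]) intersects {b+ε} × [0,1]. -/

import Mathlib

/-!
If the component of `p` in `K = G(f) ∩ [a, c] × [0, 1]` missed the edge `x = c`, then by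
compactness `K` would split into disjoint compact pieces `A ∋ p` and `B` with `A` away from the
edge. Let `m < c` be the largest abscissa of `A`, attained at `(m, y₁)`, and let `δ > 0` separate
`A` from `B`. The weak intermediate value property, applied from `(m, y₁)` to some
`x₂ ∈ (m, m + δ/2]`, gives `y₂` such that every level between `y₁` and `y₂` is attained over
`[m, x₂]`. Each of these points lies in `A` or in `B`; the level `y₁` is attained in `A`, and `y₂`
in `B` because `x₂ > m`. Since the interval of levels is connected, some level is attained both in
`A` and in `B`, by points at distance at most `δ/2`: a contradiction.
-/

open Set

/-- Graph of a set-valued function on [0,1]. -/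
def GraphSV (f : ℝ → Set ℝ) : Set (ℝ × ℝ) :=
  {p | p.1 ∈ Icc (0:ℝ) 1 ∧ p.2 ∈ f p.1}

/-- f has nonempty compact values contained in [0,1]. -/
def SV (f : ℝ → Set ℝ) : Prop :=
  ∀ x ∈ Icc (0:ℝ) 1, (f x).Nonempty ∧ IsCompact (f x) ∧ f x ⊆ Icc (0:ℝ) 1

/-- Upper semicontinuity on [0,1]. -/
def USC (f : ℝ → Set ℝ) : Prop :=
  ∀ x ∈ Icc (0:ℝ) 1, ∀ U : Set ℝ, IsOpen U → f x ⊆ U →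
    ∃ V : Set ℝ, IsOpen V ∧ x ∈ V ∧ ∀ v ∈ V ∩ Icc (0:ℝ) 1, f v ⊆ U

/-- Weak Intermediate Value Property. -/
def WIVP (f : ℝ → Set ℝ) : Prop :=
  ∀ x₁ ∈ Icc (0:ℝ) 1, ∀ x₂ ∈ Icc (0:ℝ) 1, x₁ ≠ x₂ → ∀ y₁ ∈ f x₁,
    ∃ y₂ ∈ f x₂, ∀ y ∈ uIcc y₁ y₂, ∃ x ∈ uIcc x₁ x₂, y ∈ f x

/-- Intermediate Value Property. -/
def IVP (f : ℝ → Set ℝ) : Prop :=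
  ∀ x₁ ∈ Icc (0:ℝ) 1, ∀ x₂ ∈ Icc (0:ℝ) 1, x₁ ≠ x₂ → ∀ y₁ ∈ f x₁, ∀ y₂ ∈ f x₂, y₁ ≠ y₂ →
    ∀ y ∈ Ioo (min y₁ y₂) (max y₁ y₂), ∃ x ∈ Ioo (min x₁ x₂) (max x₁ x₂), y ∈ f x

theorem isClosed_graphSV {f : ℝ → Set ℝ} (hclosed : ∀ x ∈ Icc (0:ℝ) 1, IsClosed (f x))
    (husc : USC f) : IsClosed (GraphSV f) := by
  rw [← isOpen_compl_iff, isOpen_iff_mem_nhds]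
  rintro ⟨x, y⟩ hxy
  by_cases hx : x ∈ Icc (0:ℝ) 1
  · obtain ⟨r, hr, hball⟩ :=
      Metric.isOpen_iff.1 (hclosed x hx).isOpen_compl y fun hy => hxy ⟨hx, hy⟩
    obtain ⟨V, hV, hxV, hVf⟩ := husc x hx (Metric.closedBall y (r / 2))ᶜ
      Metric.isClosed_closedBall.isOpen_compl fun z hz hz' =>
        hball (Metric.closedBall_subset_ball (half_lt_self hr) hz') hz
    filter_upwards [prod_mem_nhds (hV.mem_nhds hxV) (Metric.ball_mem_nhds y (half_pos hr))]
    rintro ⟨x', y'⟩ ⟨hx'V, hy'⟩ ⟨hx', hy'f⟩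
    exact hVf x' ⟨hx'V, hx'⟩ hy'f (Metric.ball_subset_closedBall hy')
  · filter_upwards [(isClosed_Icc.isOpen_compl.preimage continuous_fst).mem_nhds hx]
      with q hq hqG using hq hqG.1

theorem exists_isClopen_disjoint_of_disjoint_connectedComponent {X : Type*} [TopologicalSpace X]
    [T2Space X] [CompactSpace X] {x : X} {E : Set X} (hE : IsClosed E)
    (h : Disjoint (connectedComponent x) E) : ∃ U, IsClopen U ∧ x ∈ U ∧ Disjoint U E := by
  rw [connectedComponent_eq_iInter_isClopen, disjoint_iff_inter_eq_empty, inter_comm] at h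
  obtain ⟨t, ht⟩ := hE.isCompact.elim_finite_subfamily_closed _ (fun s => s.2.1.isClosed) h
  refine ⟨⋂ s ∈ t, s.1, isClopen_biInter_finset fun s _ => s.2.1,
    mem_iInter₂.2 fun s _ => s.2.2, ?_⟩
  rw [disjoint_iff_inter_eq_empty, inter_comm, ht]

theorem IsCompact.exists_separation_of_disjoint_connectedComponentIn {α : Type*}
    [TopologicalSpace α] [T2Space α] {K E : Set α} (hK : IsCompact K) (hE : IsClosed E) {p : α}
    (hp : p ∈ K) (h : Disjoint (connectedComponentIn K p) E) :
    ∃ A B : Set α,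
      IsCompact A ∧ IsCompact B ∧ Disjoint A B ∧ A ∪ B = K ∧ p ∈ A ∧ Disjoint A E := by
  have : CompactSpace K := isCompact_iff_compactSpace.1 hK
  rw [connectedComponentIn_eq_image hp, disjoint_image_left] at h
  obtain ⟨U, hU, hpU, hUE⟩ :=
    exists_isClopen_disjoint_of_disjoint_connectedComponent (hE.preimage continuous_subtype_val) h
  refine ⟨(↑) '' U, (↑) '' Uᶜ, hU.isClosed.isCompact.image continuous_subtype_val,
    hU.compl.isClosed.isCompact.image continuous_subtype_val,
    (disjoint_image_iff Subtype.val_injective).2 disjoint_compl_right, ?_, ⟨⟨p, hp⟩, hpU, rfl⟩,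
    disjoint_image_left.2 hUE⟩
  rw [← image_union, union_compl_self, image_univ, Subtype.range_coe]

theorem exists_snd_eq_of_isPreconnected_of_cover {α β : Type*} [TopologicalSpace α]
    [TopologicalSpace β] [T2Space β] {A B : Set (α × β)} (hA : IsCompact A) (hB : IsCompact B)
    {s : Set α} (hs : IsClosed s) {I : Set β} (hI : IsPreconnected I)
    (hcover : ∀ y ∈ I, ∃ x ∈ s, (x, y) ∈ A ∪ B)
    (hAI : ∃ y ∈ I, ∃ x ∈ s, (x, y) ∈ A) (hBI : ∃ y ∈ I, ∃ x ∈ s, (x, y) ∈ B) :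
    ∃ u ∈ A, ∃ v ∈ B, u.1 ∈ s ∧ v.1 ∈ s ∧ u.2 = v.2 := by
  have hslice : ∀ {C : Set (α × β)}, IsCompact C →
      IsClosed (Prod.snd '' (C ∩ Prod.fst ⁻¹' s)) :=
    fun hC => ((hC.inter_right (hs.preimage continuous_fst)).image continuous_snd).isClosed
  obtain ⟨y, -, ⟨u, ⟨huA, hus⟩, rfl⟩, ⟨v, ⟨hvB, hvs⟩, hvu⟩⟩ :=
    isPreconnected_closed_iff.1 hI _ _ (hslice hA) (hslice hB)
      (fun y hy => (hcover y hy).elim fun x ⟨hx, hxy⟩ =>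
        hxy.imp (fun h => ⟨(x, y), ⟨h, hx⟩, rfl⟩) fun h => ⟨(x, y), ⟨h, hx⟩, rfl⟩)
      (hAI.imp fun y ⟨hy, x, hx, hxy⟩ => ⟨hy, (x, y), ⟨hxy, hx⟩, rfl⟩)
      (hBI.imp fun y ⟨hy, x, hx, hxy⟩ => ⟨hy, (x, y), ⟨hxy, hx⟩, rfl⟩)
  exact ⟨u, huA, v, hvB, hus, hvs, hvu.symm⟩

theorem WIVP.false_of_separation {f : ℝ → Set ℝ} (hrange : ∀ x ∈ Icc (0:ℝ) 1, f x ⊆ Icc 0 1)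
    (hwivp : WIVP f) {a c : ℝ} (hc : c ≤ 1) {A B : Set (ℝ × ℝ)} (hA : IsCompact A)
    (hB : IsCompact B) (hAB : Disjoint A B) (hK : A ∪ B = GraphSV f ∩ Icc a c ×ˢ Icc (0:ℝ) 1)
    (hAne : A.Nonempty) (hAc : Disjoint A {q | q.1 = c}) : False := by
  obtain ⟨⟨m, y₁⟩, hA₁, hmax⟩ := hA.exists_isMaxOn hAne continuous_fst.continuousOn
  have hK₁ : (m, y₁) ∈ GraphSV f ∩ Icc a c ×ˢ Icc (0:ℝ) 1 := hK ▸ Or.inl hA₁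
  have hmc : m < c := hK₁.2.1.2.lt_of_ne fun h => hAc.ne_of_mem hA₁ h rfl
  obtain ⟨r, hr, hsep⟩ := Metric.exists_pos_forall_lt_edist hA hB.isClosed hAB
  set x₂ := min (m + r / 2) c
  have hmx₂ : m < x₂ := lt_min (by linarith [NNReal.coe_pos.2 hr]) hmc
  have hx₂ : x₂ ∈ Icc (0:ℝ) 1 := ⟨hK₁.1.1.1.trans hmx₂.le, (min_le_right _ _).trans hc⟩
  have hmemK : ∀ x ∈ Icc m x₂, ∀ y ∈ f x, (x, y) ∈ A ∪ B := by
    intro x hx y hy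
    have hx01 : x ∈ Icc (0:ℝ) 1 := ⟨hK₁.1.1.1.trans hx.1, hx.2.trans hx₂.2⟩
    rw [hK]
    exact ⟨⟨hx01, hy⟩, ⟨hK₁.2.1.1.trans hx.1, hx.2.trans (min_le_right _ _)⟩,
      hrange x hx01 hy⟩
  obtain ⟨y₂, hy₂, hlevels⟩ := hwivp m hK₁.1.1 x₂ hx₂ hmx₂.ne y₁ hK₁.1.2
  have hB₂ : (x₂, y₂) ∈ B :=
    (hmemK x₂ (right_mem_Icc.2 hmx₂.le) y₂ hy₂).resolve_left fun h => (hmax h).not_gt hmx₂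
  rw [uIcc_of_le hmx₂.le] at hlevels
  obtain ⟨u, hu, v, hv, hus, hvs, huv⟩ := exists_snd_eq_of_isPreconnected_of_cover hA hB
    isClosed_Icc isPreconnected_uIcc
    (fun y hy => (hlevels y hy).imp fun x ⟨hx, hxy⟩ => ⟨hx, hmemK x hx y hxy⟩)
    ⟨y₁, left_mem_uIcc, m, left_mem_Icc.2 hmx₂.le, hA₁⟩
    ⟨y₂, right_mem_uIcc, x₂, right_mem_Icc.2 hmx₂.le, hB₂⟩
  have hclose : dist u v ≤ r / 2 := by
    rw [Prod.dist_eq, huv, dist_self]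
    have hx₂r : x₂ - m ≤ r / 2 := by linarith [min_le_left (m + r / 2) c]
    exact max_le ((Real.dist_le_of_mem_Icc hus hvs).trans hx₂r) (by positivity)
  have hfar : (r : ℝ) < dist u v := by
    have := hsep u hu v hv
    rwa [edist_nndist, ENNReal.coe_lt_coe, ← NNReal.coe_lt_coe, coe_nndist] at this
  linarith [NNReal.coe_pos.2 hr]

theorem stmt19 (f : ℝ → Set ℝ) (hSV : SV f) (husc : USC f) (hwivp : WIVP f)
    (a b ε : ℝ) (hbε : b + ε ≤ 1) :
    ∀ p ∈ GraphSV f ∩ Icc a (b + ε) ×ˢ Icc (0:ℝ) 1,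
      (connectedComponentIn (GraphSV f ∩ Icc a (b + ε) ×ˢ Icc (0:ℝ) 1) p ∩
        {q : ℝ × ℝ | q.1 = b + ε}).Nonempty := by
  intro p hp
  have hK : IsCompact (GraphSV f ∩ Icc a (b + ε) ×ˢ Icc (0:ℝ) 1) :=
    (isCompact_Icc.prod isCompact_Icc).inter_left
      (isClosed_graphSV (fun x hx => (hSV x hx).2.1.isClosed) husc)
  by_contra hmiss
  rw [not_nonempty_iff_eq_empty, ← disjoint_iff_inter_eq_empty] at hmiss
  obtain ⟨A, B, hA, hB, hAB, hABK, hpA, hAE⟩ :=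
    hK.exists_separation_of_disjoint_connectedComponentIn
      (isClosed_eq continuous_fst continuous_const) hp hmiss
  exact WIVP.false_of_separation (fun x hx => (hSV x hx).2.2) hwivp hbε hA hB hAB hABK
    ⟨p, hpA⟩ hAE
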